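/- arXiv:2305.03861 — 6 statements merged into one kernel-verified Lean document; each statement's English description precedes it below -/
import Mathlib

section
/- Let n ≥ 4 and let A be a real symmetric n×n matrix with trace zero. Then trace(A⁴) ≤ ((n² − 3n + 3)/(n(n − 1))) · (trace(A²))². -/
/-!
With `λ` the eigenvalues of `A`, the traces are power sums `∑ λᵢᵏ` and `∑ λᵢ = 0`, so the claim
is a sharp inequality for real numbers with zero sum, attained at `(n - 1, -1, …, -1)`. It is
proved by induction on `n`: remove one number `t` and recentre the other `K = n - 1` by `t / K`.
Their quartic sum then splits into the quartic, cubic and quadratic sums of the recentred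
numbers; the quartic one is bounded by induction, the cubic one by Okumura's inequality
`(∑ yᵢ³)² ≤ (K - 2)² (∑ yᵢ²)³ / (K (K - 1))`, and the cross term is absorbed by AM-GM.
Okumura's inequality follows from `∑ (yᵢ + c)² (M - yᵢ) ≥ 0`, where `M` is Samuelson's bound
`K yᵢ² ≤ (K - 1) ∑ yⱼ²`.
-/

open Finset Matrix

theorem Matrix.IsHermitian.trace_pow_eq_sum_eigenvalues_pow {𝕜 n : Type*} [RCLike 𝕜] [Fintype n]
    [DecidableEq n] {A : Matrix n n 𝕜} (hA : A.IsHermitian) (k : ℕ) :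
    (A ^ k).trace = ∑ i, (hA.eigenvalues i : 𝕜) ^ k := by
  conv_lhs => rw [hA.spectral_theorem, ← map_pow, Unitary.conjStarAlgAut_apply, trace_mul_cycle,
    Unitary.coe_star_mul_self, Matrix.one_mul, diagonal_pow, trace_diagonal]
  simp

variable {ι : Type*} {s : Finset ι}

theorem card_mul_sq_le_of_sum_eq_zero {y : ι → ℝ} (hy : ∑ i ∈ s, y i = 0) {i : ι} (hi : i ∈ s) :
    #s * y i ^ 2 ≤ (#s - 1) * ∑ j ∈ s, y j ^ 2 := by
  classical
  have hcs := sq_sum_le_card_mul_sum_sq (s := s.erase i) (f := y)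
  rw [sum_erase_eq_sub hi, sum_erase_eq_sub hi, hy, cast_card_erase_of_mem hi] at hcs
  linear_combination hcs

theorem sum_sub_sq_of_sum_eq_zero {z : ι → ℝ} (hz : ∑ i ∈ s, z i = 0) (c : ℝ) :
    ∑ i ∈ s, (z i - c) ^ 2 = ∑ i ∈ s, z i ^ 2 + #s * c ^ 2 := by
  have h (i : ι) : (z i - c) ^ 2 = z i ^ 2 - 2 * c * z i + c ^ 2 := by ring
  simp only [h, sum_add_distrib, sum_sub_distrib, ← mul_sum, sum_const, nsmul_eq_mul, hz]
  ring

theorem sum_sub_pow_four_of_sum_eq_zero {z : ι → ℝ} (hz : ∑ i ∈ s, z i = 0) (c : ℝ) :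
    ∑ i ∈ s, (z i - c) ^ 4 = ∑ i ∈ s, z i ^ 4 - 4 * c * ∑ i ∈ s, z i ^ 3
      + 6 * c ^ 2 * ∑ i ∈ s, z i ^ 2 + #s * c ^ 4 := by
  have h (i : ι) : (z i - c) ^ 4
      = z i ^ 4 - 4 * c * z i ^ 3 + 6 * c ^ 2 * z i ^ 2 - 4 * c ^ 3 * z i + c ^ 4 := by ring
  simp only [h, sum_add_distrib, sum_sub_distrib, ← mul_sum, sum_const, nsmul_eq_mul, hz]
  ring

theorem sum_pow_three_le_of_le {y : ι → ℝ} (hy : ∑ i ∈ s, y i = 0) {M : ℝ} (hM : 0 < M)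
    (hyM : ∀ i ∈ s, y i ≤ M) :
    ∑ i ∈ s, y i ^ 3 ≤ M * ∑ i ∈ s, y i ^ 2 - (∑ i ∈ s, y i ^ 2) ^ 2 / (#s * M) := by
  rcases s.eq_empty_or_nonempty with rfl | hne
  · simp
  set S := ∑ i ∈ s, y i ^ 2
  obtain ⟨c, hc⟩ : ∃ c, #s * M * c = S := ⟨S / (#s * M), mul_div_cancel₀ _ (by positivity)⟩
  have hnonneg : 0 ≤ ∑ i ∈ s, (y i + c) ^ 2 * (M - y i) :=
    sum_nonneg fun i hi => mul_nonneg (sq_nonneg _) (sub_nonneg.2 (hyM i hi))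
  have h (i : ι) : (y i + c) ^ 2 * (M - y i)
      = (M - 2 * c) * y i ^ 2 + (2 * c * M - c ^ 2) * y i + c ^ 2 * M - y i ^ 3 := by ring
  simp only [h, sum_add_distrib, sum_sub_distrib, ← mul_sum, sum_const, nsmul_eq_mul, hy] at hnonneg
  rw [show S ^ 2 / (#s * M) = S * c by rw [← hc]; field_simp]
  linear_combination hnonneg + c * hc

theorem sq_sum_pow_three_le {y : ι → ℝ} (hs : 2 ≤ #s) (hy : ∑ i ∈ s, y i = 0) :
    (∑ i ∈ s, y i ^ 3) ^ 2 ≤ (#s - 2) ^ 2 * (∑ i ∈ s, y i ^ 2) ^ 3 / (#s * (#s - 1)) := by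
  have hK : (2 : ℝ) ≤ #s := by exact_mod_cast hs
  rcases (sum_nonneg fun i _ => sq_nonneg (y i) : 0 ≤ ∑ i ∈ s, y i ^ 2).eq_or_lt with hS | hS
  · have hy0 : ∀ i ∈ s, y i = 0 := fun i hi => pow_eq_zero_iff two_ne_zero |>.1 <|
      (sum_eq_zero_iff_of_nonneg fun j _ => sq_nonneg _).1 hS.symm i hi
    have h3 : ∑ i ∈ s, y i ^ 3 = 0 := sum_eq_zero fun i hi => by simp [hy0 i hi]
    simp [h3, ← hS]
  set S := ∑ i ∈ s, y i ^ 2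
  have hS' : 0 < (#s - 1) * S / #s := div_pos (mul_pos (by linarith) hS) (by linarith)
  set M := √((#s - 1) * S / #s)
  have hM : 0 < M := Real.sqrt_pos.2 hS'
  have hKM : #s * M ^ 2 = (#s - 1) * S := by
    rw [Real.sq_sqrt hS'.le]
    field_simp
  have hbound : ∀ i ∈ s, |y i| ≤ M := fun i hi => by
    rw [← Real.sqrt_sq_eq_abs]
    refine Real.sqrt_le_sqrt ?_
    rw [le_div_iff₀ (by positivity)]
    linarith [card_mul_sq_le_of_sum_eq_zero hy hi]
  have hupper := sum_pow_three_le_of_le hy hM fun i hi => (abs_le.1 (hbound i hi)).2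
  have hlower : -∑ i ∈ s, y i ^ 3 ≤ M * S - S ^ 2 / (#s * M) := by
    simpa [Odd.neg_pow (show Odd 3 by decide)] using sum_pow_three_le_of_le (y := fun i => -y i)
      (by simp [hy]) hM fun i hi => neg_le.1 (abs_le.1 (hbound i hi)).1
  have hR : M * S - S ^ 2 / (#s * M) = (#s - 2) * S ^ 2 / (#s * M) := by
    rw [eq_div_iff (by positivity), sub_mul, div_mul_cancel₀ _ (by positivity)]
    linear_combination S * hKM
  calc (∑ i ∈ s, y i ^ 3) ^ 2 = |∑ i ∈ s, y i ^ 3| ^ 2 := (sq_abs _).symm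
    _ ≤ (M * S - S ^ 2 / (#s * M)) ^ 2 :=
      pow_le_pow_left₀ (abs_nonneg _) (abs_le.2 ⟨by linarith, hupper⟩) 2
    _ = (#s - 2) ^ 2 * S ^ 3 / (#s * (#s - 1)) := by
      rw [hR, div_pow, div_eq_div_iff (by positivity) (by nlinarith)]
      linear_combination (-(#s - 2) ^ 2 * S ^ 3 * #s : ℝ) * hKM

/- `t` is the removed number, `W`, `E3`, `E4` are the quadratic, cubic and quartic sums of the
`K` remaining numbers after recentring them by `t / K`. -/
theorem quartic_bound_succ {K t W E3 E4 : ℝ} (hK : 2 ≤ K) (hW : 0 ≤ W)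
    (hE4 : E4 ≤ (K ^ 2 - 3 * K + 3) / (K * (K - 1)) * W ^ 2)
    (hE3 : E3 ^ 2 ≤ (K - 2) ^ 2 * W ^ 3 / (K * (K - 1))) :
    t ^ 4 + (E4 - 4 * (t / K) * E3 + 6 * (t / K) ^ 2 * W + K * (t / K) ^ 4)
      ≤ ((K + 1) ^ 2 - 3 * (K + 1) + 3) / ((K + 1) * (K + 1 - 1))
        * (t ^ 2 + (W + K * (t / K) ^ 2)) ^ 2 := by
  have hK0 : K ≠ 0 := by linarith
  have hK1 : 0 < K - 1 := by linarith
  -- AM-GM split of the cross term: `4 p q` is `16 (t / K) ^ 2` times Okumura's bound on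
  -- `E3 ^ 2`, and the ratio `p / q` is the one that makes the final identity exact.
  set p := 2 * (K - 2) / (K * (K + 1) * (K - 1)) * W ^ 2 with hp_def
  set q := 2 * (K - 2) * (K + 1) / K ^ 2 * t ^ 2 * W with hq_def
  have hp : 0 ≤ p := by positivity
  have hq : 0 ≤ q := by positivity
  have hpq : (4 * (t / K) * E3) ^ 2 ≤ 4 * p * q := calc
    (4 * (t / K) * E3) ^ 2 = 16 * (t / K) ^ 2 * E3 ^ 2 := by ring
    _ ≤ 16 * (t / K) ^ 2 * ((K - 2) ^ 2 * W ^ 3 / (K * (K - 1))) := by gcongr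
    _ = 4 * p * q := by rw [hp_def, hq_def]; field_simp; ring
  have hcross : -(4 * (t / K) * E3) ≤ p + q := by nlinarith [sq_nonneg (p - q)]
  have hid : t ^ 4 + ((K ^ 2 - 3 * K + 3) / (K * (K - 1)) * W ^ 2 + (p + q)
        + 6 * (t / K) ^ 2 * W + K * (t / K) ^ 4)
      = ((K + 1) ^ 2 - 3 * (K + 1) + 3) / ((K + 1) * (K + 1 - 1))
        * (t ^ 2 + (W + K * (t / K) ^ 2)) ^ 2 := by
    rw [hp_def, hq_def, add_sub_cancel_right]
    field_simp
    ring
  linarith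

theorem sum_pow_four_le_of_sum_eq_zero (s : Finset ι) {x : ι → ℝ} (hx : ∑ i ∈ s, x i = 0) :
    ∑ i ∈ s, x i ^ 4 ≤ (#s ^ 2 - 3 * #s + 3) / (#s * (#s - 1)) * (∑ i ∈ s, x i ^ 2) ^ 2 := by
  classical
  induction s using Finset.induction_on generalizing x with
  | empty => simp
  | insert a s ha ih =>
    rw [sum_insert ha] at hx
    rw [sum_insert ha, sum_insert ha, card_insert_of_notMem ha, Nat.cast_succ]
    rcases Nat.lt_or_ge #s 2 with hs | hs
    · obtain h0 | h1 : #s = 0 ∨ #s = 1 := by omega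
      · obtain rfl := card_eq_zero.1 h0
        simp [show x a = 0 by simpa using hx]
      · obtain ⟨b, rfl⟩ := card_eq_one.1 h1
        have hb : x b = -x a := by simp at hx; linarith
        simp only [sum_singleton, card_singleton, hb]
        norm_num
        exact le_of_eq (by ring)
    have hK : (2 : ℝ) ≤ #s := by exact_mod_cast hs
    set c := x a / #s
    have hz : ∑ i ∈ s, (x i + c) = 0 := by
      rw [sum_add_distrib, sum_const, nsmul_eq_mul, mul_div_cancel₀ _ (by positivity)]
      linarith
    have hshift (i : ι) : x i = (x i + c) - c := by ring
    rw [sum_congr rfl fun i _ => congrArg (· ^ 4) (hshift i),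
      sum_congr rfl fun i _ => congrArg (· ^ 2) (hshift i),
      sum_sub_pow_four_of_sum_eq_zero hz, sum_sub_sq_of_sum_eq_zero hz]
    exact quartic_bound_succ hK (sum_nonneg fun i _ => sq_nonneg _) (ih hz)
      (sq_sum_pow_three_le hs hz)

theorem trace_pow_four_le_general (n : ℕ) (A : Matrix (Fin n) (Fin n) ℝ)
    (hA : A.IsSymm) (htr : A.trace = 0) :
    (A ^ 4).trace ≤ ((n : ℝ) ^ 2 - 3 * n + 3) / (n * (n - 1)) * (A ^ 2).trace ^ 2 := by
  have hH : A.IsHermitian := isHermitian_iff_isSymm.2 hA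
  have hsum : ∑ i, hH.eigenvalues i = 0 := by simpa [hH.trace_eq_sum_eigenvalues] using htr
  simpa [hH.trace_pow_eq_sum_eigenvalues_pow] using sum_pow_four_le_of_sum_eq_zero univ hsum

theorem trace_pow_four_le (n : ℕ) (hn : 4 ≤ n) (A : Matrix (Fin n) (Fin n) ℝ)
    (hA : A.IsSymm) (htr : A.trace = 0) :
    (A ^ 4).trace ≤ ((n : ℝ) ^ 2 - 3 * n + 3) / (n * (n - 1)) * (A ^ 2).trace ^ 2 :=
  trace_pow_four_le_general n A hA htr
end

section
/- Let n ≥ 4 and let A be a real symmetric n×n matrix with trace zero. Then equality trace(A⁴) = ((n² − 3n + 3)/(n(n − 1))) · (trace(A²))² holds if and only if A has an eigenvalue whose eigenspace has dimension at least n − 1 (equivalently, an eigenvalue of multiplicity at least n − 1). -/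
/-!
Write `λ₁, …, λₙ` for the eigenvalues of `A`, so that `∑ λᵢ = 0`, `tr A² = ∑ λᵢ²` and
`tr A⁴ = ∑ λᵢ⁴`. The defect `(n² - 3n + 3)(∑ λᵢ²)² - n(n - 1) ∑ λᵢ⁴` is, up to the factor
`2(n - 2)`, the sum over `i` and `j, k ≠ i` of `(bᵢⱼ - bᵢₖ)²` with `bᵢⱼ = λⱼ((n - 2)λᵢ + λⱼ)`.
So equality forces `(λⱼ - λₖ)((n - 2)λᵢ + λⱼ + λₖ) = 0` for all such triples, and for `n ≥ 4`
this leaves only the spectra with `n - 1` equal eigenvalues, for which equality is checked directly.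
-/

open Finset Matrix Module

theorem Finset.sum_sum_sub_sq {κ R : Type*} [CommRing R] (s : Finset κ) (b : κ → R) :
    ∑ j ∈ s, ∑ k ∈ s, (b j - b k) ^ 2 = 2 * (#s * ∑ j ∈ s, b j ^ 2 - (∑ j ∈ s, b j) ^ 2) := by
  simp only [sub_sq, sum_add_distrib, sum_sub_distrib, sum_const, nsmul_eq_mul, ← mul_sum,
    ← sum_mul, mul_assoc]
  ring

section AllButOneEqual

variable {ι : Type*} [Fintype ι]

theorem Fintype.card_sub_one_le_card_filter_eq_iff {α : Type*} [Nonempty ι] [DecidableEq α]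
    (f : ι → α) (a : α) : card ι - 1 ≤ #{i | f i = a} ↔ ∃ m, ∀ i ≠ m, f i = a := by
  classical
  constructor
  · intro h
    have hne : #{i | ¬f i = a} ≤ 1 := by
      have := card_filter_add_card_filter_not (s := univ) (fun i ↦ f i = a)
      rw [card_univ] at this
      omega
    obtain ⟨m, hm⟩ := card_le_one_iff_subset_singleton.1 hne
    refine ⟨m, fun i hi ↦ ?_⟩
    by_contra hfi
    exact hi (mem_singleton.1 (hm (mem_filter.2 ⟨mem_univ i, hfi⟩)))
  · rintro ⟨m, hm⟩
    calc card ι - 1 = #(univ.erase m) := by rw [card_erase_of_mem (mem_univ m), card_univ]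
      _ ≤ #{i | f i = a} :=
        card_le_card fun i hi ↦ mem_filter.2 ⟨mem_univ i, hm i (ne_of_mem_erase hi)⟩

theorem exists_forall_ne_eq_of_forall_mul_add_eq {K : Type*} [Field K] (hι : 4 ≤ Fintype.card ι)
    {c : K} (hc : c ≠ 0) (l : ι → K)
    (h : ∀ i j k, j ≠ i → k ≠ i → l j * (c * l i + l j) = l k * (c * l i + l k)) :
    ∃ m μ, ∀ i ≠ m, l i = μ := by
  classical
  have key : ∀ i j k, j ≠ i → k ≠ i → l j = l k ∨ c * l i + l j + l k = 0 := by
    intro i j k hj hk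
    rw [← sub_eq_zero (a := l j)]
    exact mul_eq_zero.1 (by linear_combination h i j k hj hk)
  by_cases hconst : ∀ j k, l j = l k
  · obtain ⟨m⟩ : Nonempty ι := Fintype.card_pos_iff.1 (by omega)
    exact ⟨m, l m, fun i _ ↦ hconst i m⟩
  push Not at hconst
  obtain ⟨j, k, hjk⟩ := hconst
  have hne : j ≠ k := fun e ↦ hjk (congrArg l e)
  have hthird : ∀ i, i ≠ j → i ≠ k → c * l i + l j + l k = 0 := fun i hij hik ↦
    (key i j k hij.symm hik.symm).resolve_left hjk
  obtain ⟨i₁, i₂, hi₁, hi₂, hi₁₂⟩ :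
      ∃ i₁ i₂, i₁ ∈ ({j, k} : Finset ι)ᶜ ∧ i₂ ∈ ({j, k} : Finset ι)ᶜ ∧ i₁ ≠ i₂ := by
    apply one_lt_card_iff.1
    rw [card_compl, card_pair hne]
    omega
  simp only [mem_compl, mem_insert, mem_singleton, not_or] at hi₁ hi₂
  have hrest : ∀ i, i ≠ j → i ≠ k → l i = l i₁ := fun i hij hik ↦
    mul_left_cancel₀ hc (by linear_combination hthird i hij hik - hthird i₁ hi₁.1 hi₁.2)
  -- otherwise the triples `(i₁, j, i₂)` and `(i₁, k, i₂)` give `l j = -(c + 1) l i₁ = l k`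
  have hj_or_hk : l j = l i₁ ∨ l k = l i₁ := by
    by_contra! hjk₁
    rw [← hrest i₂ hi₂.1 hi₂.2] at hjk₁
    have hj := (key i₁ j i₂ (Ne.symm hi₁.1) hi₁₂.symm).resolve_left hjk₁.1
    have hk := (key i₁ k i₂ (Ne.symm hi₁.2) hi₁₂.symm).resolve_left hjk₁.2
    exact hjk (by linear_combination hj - hk)
  rcases hj_or_hk with hj | hk
  · refine ⟨k, l i₁, fun i hik ↦ ?_⟩
    by_cases hij : i = j
    · rw [hij, hj]
    · exact hrest i hij hik
  · refine ⟨j, l i₁, fun i hij ↦ ?_⟩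
    by_cases hik : i = k
    · rw [hik, hk]
    · exact hrest i hij hik

end AllButOneEqual

section PowerSums

variable {n : ℕ}

theorem sum_sum_sum_sq_eq (l : Fin n → ℝ) (hl : ∑ i, l i = 0) :
    ∑ i, ∑ j ∈ univ.erase i, ∑ k ∈ univ.erase i,
        (l j * ((n - 2) * l i + l j) - l k * ((n - 2) * l i + l k)) ^ 2 =
      2 * (n - 2) * ((n ^ 2 - 3 * n + 3) * (∑ i, l i ^ 2) ^ 2 - n * (n - 1) * ∑ i, l i ^ 4) := by
  set c : ℝ := n - 2
  have hrow (i : Fin n) : ∑ j, l j * (c * l i + l j) = ∑ j, l j ^ 2 := by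
    simp only [mul_add, sum_add_distrib, ← sum_mul, hl, zero_mul, zero_add, sq]
  have hsq : ∑ i, ∑ j, (l j * (c * l i + l j)) ^ 2 =
      c ^ 2 * (∑ i, l i ^ 2) ^ 2 + n * ∑ i, l i ^ 4 := by
    simp_rw [show ∀ i j, (l j * (c * l i + l j)) ^ 2 =
      c ^ 2 * l i ^ 2 * l j ^ 2 + 2 * c * l i * l j ^ 3 + l j ^ 4 from fun _ _ ↦ by ring]
    simp only [sum_add_distrib, ← mul_sum, ← sum_mul, hl, sum_const, card_univ, Fintype.card_fin,
      nsmul_eq_mul]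
    ring
  calc _ = ∑ i, (2 * (n - 1) * ∑ j, (l j * (c * l i + l j)) ^ 2
          - 2 * n * (n - 1) ^ 2 * l i ^ 4 + 4 * (n - 1) * (∑ j, l j ^ 2) * l i ^ 2
          - 2 * (∑ j, l j ^ 2) ^ 2) := by
        refine sum_congr rfl fun i hi ↦ ?_
        have : ((n - 1 : ℕ) : ℝ) = n - 1 := by
          rw [Nat.cast_sub (Fin.pos i), Nat.cast_one]
        rw [sum_sum_sub_sq, card_erase_of_mem hi, card_univ, Fintype.card_fin, this,
          sum_erase_eq_sub hi, sum_erase_eq_sub hi, hrow]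
        ring
    _ = 2 * (n - 1) * (c ^ 2 * (∑ i, l i ^ 2) ^ 2 + n * ∑ i, l i ^ 4)
          - 2 * n * (n - 1) ^ 2 * ∑ i, l i ^ 4 + 4 * (n - 1) * (∑ j, l j ^ 2) * ∑ i, l i ^ 2
          - 2 * n * (∑ j, l j ^ 2) ^ 2 := by
        simp only [sum_add_distrib, sum_sub_distrib, ← mul_sum, hsq, sum_const, card_univ,
          Fintype.card_fin, nsmul_eq_mul]
        ring
    _ = _ := by ring

theorem card_mul_sum_pow_four_eq_of_forall_ne_eq (l : Fin n → ℝ) (hl : ∑ i, l i = 0) {m : Fin n}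
    {μ : ℝ} (h : ∀ i ≠ m, l i = μ) :
    n * (n - 1) * ∑ i, l i ^ 4 = (n ^ 2 - 3 * n + 3) * (∑ i, l i ^ 2) ^ 2 := by
  have hsum (k : ℕ) : ∑ i, l i ^ k = (n - 1) * μ ^ k + l m ^ k := by
    rw [← add_sum_erase _ _ (mem_univ m),
      sum_congr rfl fun i hi ↦ by rw [h i (ne_of_mem_erase hi)], sum_const,
      card_erase_of_mem (mem_univ m), card_univ, Fintype.card_fin, nsmul_eq_mul,
      Nat.cast_sub (Fin.pos m), Nat.cast_one, add_comm]
  have hm : l m = -((n - 1) * μ) := by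
    have := hsum 1
    simp only [pow_one, hl] at this
    linarith
  rw [hsum, hsum, hm]
  ring

theorem card_mul_sum_pow_four_eq_iff (hn : 4 ≤ n) (l : Fin n → ℝ) (hl : ∑ i, l i = 0) :
    n * (n - 1) * ∑ i, l i ^ 4 = (n ^ 2 - 3 * n + 3) * (∑ i, l i ^ 2) ^ 2 ↔
      ∃ m μ, ∀ i ≠ m, l i = μ := by
  refine ⟨fun heq ↦ ?_, fun ⟨m, μ, h⟩ ↦ card_mul_sum_pow_four_eq_of_forall_ne_eq l hl h⟩
  have hc : (n : ℝ) - 2 ≠ 0 := by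
    have : (4 : ℝ) ≤ n := by exact_mod_cast hn
    linarith
  have hsos : ∑ i, ∑ j ∈ univ.erase i, ∑ k ∈ univ.erase i,
      (l j * ((n - 2) * l i + l j) - l k * ((n - 2) * l i + l k)) ^ 2 = 0 := by
    rw [sum_sum_sum_sq_eq l hl, heq]
    ring
  refine exists_forall_ne_eq_of_forall_mul_add_eq (by simpa using hn) hc l fun i j k hj hk ↦ ?_
  have hi := (sum_eq_zero_iff_of_nonneg fun _ _ ↦ by positivity).1 hsos i (mem_univ i)
  have hij := (sum_eq_zero_iff_of_nonneg fun _ _ ↦ by positivity).1 hi j (by simpa using hj)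
  have hijk := (sum_eq_zero_iff_of_nonneg fun _ _ ↦ by positivity).1 hij k (by simpa using hk)
  exact sub_eq_zero.1 (pow_eq_zero_iff two_ne_zero |>.1 hijk)

end PowerSums

namespace Matrix.IsHermitian

variable {𝕜 n : Type*} [RCLike 𝕜] [Fintype n] [DecidableEq n] {A : Matrix n n 𝕜}

theorem trace_pow (hA : A.IsHermitian) (k : ℕ) :
    (A ^ k).trace = ∑ i, (hA.eigenvalues i : 𝕜) ^ k := by
  conv_lhs => rw [hA.spectral_theorem, ← map_pow, Unitary.conjStarAlgAut_apply, trace_mul_cycle,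
    Unitary.coe_star_mul_self, one_mul, diagonal_pow, trace_diagonal]
  simp

variable [DecidableEq 𝕜]

theorem finrank_eigenspace_toLin'_le (hA : A.IsHermitian) (μ : 𝕜) :
    finrank 𝕜 (End.eigenspace (toLin' A) μ) ≤ #{i | (hA.eigenvalues i : 𝕜) = μ} := by
  have := LinearMap.finrank_eigenspace_le (toLin' A) μ
  rw [charpoly_toLin', ← Polynomial.count_roots, hA.roots_charpoly_eq_eigenvalues,
    Multiset.count_map] at this
  simpa [Finset.card, eq_comm] using this

theorem card_le_finrank_eigenspace_toLin' (hA : A.IsHermitian) (μ : 𝕜) :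
    #{i | (hA.eigenvalues i : 𝕜) = μ} ≤ finrank 𝕜 (End.eigenspace (toLin' A) μ) := by
  have hmem (i : {i // (hA.eigenvalues i : 𝕜) = μ}) :
      ⇑(hA.eigenvectorBasis i) ∈ End.eigenspace (toLin' A) μ := by
    rw [End.mem_eigenspace_iff, toLin'_apply, hA.mulVec_eigenvectorBasis,
      RCLike.real_smul_eq_coe_smul (K := 𝕜), i.2]
  have hli : LinearIndependent 𝕜 (fun i : n ↦ ⇑(hA.eigenvectorBasis i)) :=
    hA.eigenvectorBasis.toBasis.linearIndependent.map'
      (WithLp.linearEquiv 2 𝕜 (n → 𝕜)).toLinearMap (LinearEquiv.ker _)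
  rw [← Fintype.card_subtype]
  exact LinearIndependent.fintype_card_le_finrank (R := 𝕜)
    (b := fun i ↦ (⟨_, hmem i⟩ : End.eigenspace (toLin' A) μ))
    (LinearIndependent.of_comp (Submodule.subtype _) (hli.comp _ Subtype.val_injective))

theorem finrank_eigenspace_toLin' (hA : A.IsHermitian) (μ : 𝕜) :
    finrank 𝕜 (End.eigenspace (toLin' A) μ) = #{i | (hA.eigenvalues i : 𝕜) = μ} :=
  (hA.finrank_eigenspace_toLin'_le μ).antisymm (hA.card_le_finrank_eigenspace_toLin' μ)

end Matrix.IsHermitian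

theorem trace_pow_four_eq_iff (n : ℕ) (hn : 4 ≤ n) (A : Matrix (Fin n) (Fin n) ℝ)
    (hA : A.IsSymm) (htr : A.trace = 0) :
    (A ^ 4).trace = ((n : ℝ) ^ 2 - 3 * n + 3) / (n * (n - 1)) * (A ^ 2).trace ^ 2 ↔
      ∃ μ : ℝ, n - 1 ≤ Module.finrank ℝ (Module.End.eigenspace (Matrix.toLin' A) μ) := by
  have hAH : A.IsHermitian := isHermitian_iff_isSymm.2 hA
  have hsum : ∑ i, hAH.eigenvalues i = 0 := by
    simpa [htr] using (hAH.trace_pow 1).symm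
  have hn0 : (n : ℝ) * (n - 1) ≠ 0 := by
    have : (4 : ℝ) ≤ n := by exact_mod_cast hn
    exact mul_ne_zero (by linarith) (by linarith)
  have : Nonempty (Fin n) := ⟨⟨0, by omega⟩⟩
  simp only [hAH.trace_pow, hAH.finrank_eigenspace_toLin', RCLike.ofReal_real_eq_id, id_eq]
  rw [div_mul_eq_mul_div, eq_div_iff hn0, mul_comm, card_mul_sum_pow_four_eq_iff hn _ hsum,
    exists_comm]
  simp only [← Fintype.card_sub_one_le_card_filter_eq_iff, Fintype.card_fin]
end

section
/- Let n ≥ 3 and let λ₁, …, λₙ be real numbers with λ₁ + ⋯ + λₙ = 0. Writing pₖ = σₖ(λ)/C(n,k), where σₖ(λ) is the k-th elementary symmetric polynomial of λ₁, …, λₙ and C(n,k) is the binomial coefficient, one has p₃² + 4p₂³ ≤ 0. -/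
open Finset

/-- The `k`-th elementary symmetric polynomial of `lam 0, …, lam (n-1)`. -/
noncomputable def esymm {n : ℕ} (k : ℕ) (lam : Fin n → ℝ) : ℝ :=
  ∑ s ∈ (Finset.univ : Finset (Fin n)).powersetCard k, ∏ i ∈ s, lam i

/-- The normalized elementary symmetric function `p k = σ k / C(n,k)`. -/
noncomputable def p {n : ℕ} (k : ℕ) (lam : Fin n → ℝ) : ℝ :=
  esymm k lam / (n.choose k)

/-!
The polynomial `∏ (X - λᵢ)` has only real roots, hence by Rolle's theorem so does its
`(n - 3)`-rd derivative, a cubic with roots `μ₁, μ₂, μ₃`. Differentiation preserves the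
normalized elementary symmetric functions `pₖ`, so `μ₁ + μ₂ + μ₃ = 3 p₁ = 0` and
`p₃² + 4 p₂³ = -((μ₁ - μ₂)(μ₂ - μ₃)(μ₃ - μ₁))² / 27`.
-/

theorem Nat.descFactorial_sub_mul_choose {n d k : ℕ} (hkd : k ≤ d) (hdn : d ≤ n) :
    (n - k).descFactorial (n - d) * n.choose k = n.descFactorial (n - d) * d.choose k := by
  rw [Nat.descFactorial_eq_factorial_mul_choose, Nat.descFactorial_eq_factorial_mul_choose,
    Nat.choose_symm_of_eq_add (by omega : n - k = (n - d) + (d - k)), Nat.choose_symm hdn,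
    mul_assoc, mul_assoc, Nat.choose_mul hkd]
  ring

namespace Polynomial

theorem card_roots_derivative_eq_natDegree {q : ℝ[X]}
    (hq : Multiset.card q.roots = q.natDegree) :
    Multiset.card (derivative q).roots = (derivative q).natDegree := by
  have hrolle := card_roots_le_derivative q
  have hdeg := natDegree_derivative_le q
  have hcard := card_roots' (derivative q)
  omega

theorem card_roots_iterate_derivative_eq_natDegree {q : ℝ[X]}
    (hq : Multiset.card q.roots = q.natDegree) (m : ℕ) :
    Multiset.card (derivative^[m] q).roots = (derivative^[m] q).natDegree := by
  induction m with
  | zero => exact hq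
  | succ m ih =>
    rw [Function.iterate_succ_apply']
    exact card_roots_derivative_eq_natDegree ih

end Polynomial

open Polynomial

namespace Multiset

theorem coeff_iterate_derivative_prod_X_sub_C {R : Type*} [CommRing R]
    (s : Multiset R) {d k : ℕ} (hkd : k ≤ d) (hd : d ≤ card s) :
    (derivative^[card s - d] (s.map fun t => X - C t).prod).coeff (d - k) =
      (card s - k).descFactorial (card s - d) * ((-1) ^ k * s.esymm k) := by
  rw [coeff_iterate_derivative, nsmul_eq_mul, show d - k + (card s - d) = card s - k by omega,
    prod_X_sub_C_coeff s (by omega), show card s - (card s - k) = k by omega]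

theorem coeff_iterate_derivative_prod_X_sub_C_self {R : Type*} [CommRing R]
    (s : Multiset R) {d : ℕ} (hd : d ≤ card s) :
    (derivative^[card s - d] (s.map fun t => X - C t).prod).coeff d =
      ((card s).descFactorial (card s - d) : R) := by
  simpa [esymm] using s.coeff_iterate_derivative_prod_X_sub_C (Nat.zero_le d) hd

variable (s : Multiset ℝ) {d : ℕ} (hd : d ≤ card s)
include hd

theorem natDegree_iterate_derivative_prod_X_sub_C :
    (derivative^[card s - d] (s.map fun t => X - C t).prod).natDegree = d := by
  refine le_antisymm ?_ (le_natDegree_of_ne_zero ?_)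
  · have := natDegree_iterate_derivative (s.map fun t => X - C t).prod (card s - d)
    rw [natDegree_multiset_prod_X_sub_C_eq_card] at this
    omega
  · rw [coeff_iterate_derivative_prod_X_sub_C_self s hd, Nat.cast_ne_zero]
    exact (Nat.descFactorial_pos.2 (Nat.sub_le _ _)).ne'

theorem card_roots_iterate_derivative_prod_X_sub_C :
    card (derivative^[card s - d] (s.map fun t => X - C t).prod).roots = d :=
  (card_roots_iterate_derivative_eq_natDegree (by
    rw [roots_multiset_prod_X_sub_C, natDegree_multiset_prod_X_sub_C_eq_card]) _).trans
    (natDegree_iterate_derivative_prod_X_sub_C s hd)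

theorem esymm_roots_iterate_derivative_prod_X_sub_C {k : ℕ} (hk : k ≤ d) :
    (derivative^[card s - d] (s.map fun t => X - C t).prod).roots.esymm k * (card s).choose k =
      d.choose k * s.esymm k := by
  have hdeg := natDegree_iterate_derivative_prod_X_sub_C s hd
  have hvieta := coeff_eq_esymm_roots_of_card (k := d - k) (by
    rw [card_roots_iterate_derivative_prod_X_sub_C s hd, hdeg]) (by omega)
  rw [coeff_iterate_derivative_prod_X_sub_C s hk hd, leadingCoeff, hdeg,
    coeff_iterate_derivative_prod_X_sub_C_self s hd, show d - (d - k) = k by omega] at hvieta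
  have hchoose := congrArg (Nat.cast (R := ℝ)) (Nat.descFactorial_sub_mul_choose hk hd)
  push_cast at hchoose
  have hlead : ((card s).descFactorial (card s - d) : ℝ) * (-1) ^ k ≠ 0 :=
    mul_ne_zero (by exact_mod_cast (Nat.descFactorial_pos.2 (Nat.sub_le _ _)).ne')
      (pow_ne_zero k (neg_ne_zero.2 one_ne_zero))
  refine mul_left_cancel₀ hlead ?_
  linear_combination (-((card s).choose k : ℝ)) * hvieta + ((-1) ^ k * s.esymm k) * hchoose

end Multiset

theorem sq_mul_add_four_cube_eq_neg_sq_of_add_eq_zero {a b c : ℝ} (h : a + b + c = 0) :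
    27 * (a * b * c) ^ 2 + 4 * (a * b + a * c + b * c) ^ 3 =
      -((a - b) * (b - c) * (c - a)) ^ 2 := by
  obtain rfl : c = -a - b := by linear_combination h
  ring

theorem Multiset.esymm_three_sq_add_four_esymm_two_cube_nonpos {r : Multiset ℝ}
    (hr : card r = 3) (h1 : r.esymm 1 = 0) :
    27 * r.esymm 3 ^ 2 + 4 * r.esymm 2 ^ 3 ≤ 0 := by
  obtain ⟨a, b, c, rfl⟩ := card_eq_three.mp hr
  simp only [esymm, insert_eq_cons, powersetCard_cons, zero_add, powersetCard_one, map_singleton,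
    powersetCard_zero_left, cons_zero, singleton_add, cons_add, map_cons, prod_singleton, sum_cons,
    sum_singleton, Nat.reduceAdd, card_cons, card_singleton, Nat.lt_add_one, powersetCard_eq_empty,
    Order.lt_two_iff, Std.le_refl, prod_cons, add_cons] at h1 ⊢
  linarith [sq_mul_add_four_cube_eq_neg_sq_of_add_eq_zero (a := a) (b := b) (c := c) (by linarith),
    sq_nonneg ((a - b) * (b - c) * (c - a))]

theorem esymm_eq_esymm_map_val {n : ℕ} (k : ℕ) (lam : Fin n → ℝ) :
    esymm k lam = (univ.val.map lam).esymm k :=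
  (Finset.esymm_map_val lam univ k).symm

theorem p3_sq_add_four_p2_cubed_nonpos (n : ℕ) (hn : 3 ≤ n) (lam : Fin n → ℝ)
    (hsum : ∑ i, lam i = 0) :
    p 3 lam ^ 2 + 4 * p 2 lam ^ 3 ≤ 0 := by
  set s := univ.val.map lam
  have hs : Multiset.card s = n := by simp [s]
  set r := (derivative^[Multiset.card s - 3] (s.map fun t => X - C t).prod).roots
  have hr : ∀ k ≤ 3, r.esymm k = (3 : ℕ).choose k * p k lam := by
    intro k hk
    have hchoose : (n.choose k : ℝ) ≠ 0 := by exact_mod_cast (Nat.choose_pos (by omega)).ne'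
    rw [p, esymm_eq_esymm_map_val, mul_div_assoc', eq_div_iff hchoose,
      ← s.esymm_roots_iterate_derivative_prod_X_sub_C (by omega) hk]
    simp only [r, hs]
  have h1 : r.esymm 1 = 0 := by
    rw [hr 1 (by norm_num), p, esymm, powersetCard_one]
    simp [hsum]
  have hdisc := Multiset.esymm_three_sq_add_four_esymm_two_cube_nonpos
    (s.card_roots_iterate_derivative_prod_X_sub_C (by omega)) h1
  rw [hr 2 (by norm_num), hr 3 le_rfl] at hdisc
  norm_num at hdisc
  linarith
end

section
/- Let n ≥ 4 and let λ₁, …, λₙ be real numbers with λ₁ + ⋯ + λₙ = 0. Writing pₖ = σₖ(λ)/C(n,k), one has p₄ + 3p₂² ≥ 0. -/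
/-!
When `∑ λᵢ = 0`, Newton's identities express `σ₂ = -S₂ / 2` and `σ₄ = S₂² / 8 - S₄ / 4` through
the power sums `Sₖ = ∑ λᵢᵏ`, and the claim becomes the sharp moment inequality
`n (n - 1) S₄ ≤ (n² - 3n + 3) S₂²` for centred vectors, with equality at `(n - 1, -1, …, -1)`.
The quadratic form `q(x, y) = (n - 1)(x² + y²) + (n - 1)(n - 2) x y - S₂` vanishes on every pair
of coordinates of that extremal vector, and `∑_{i ≠ j} q(λᵢ, λⱼ)² ≥ 0` expands to `(n - 1)(n - 2)`
times the moment inequality.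
-/

open Finset

lemma Nat.cast_choose_four {K : Type*} [Field K] [CharZero K] (n : ℕ) :
    (n.choose 4 : K) = n * (n - 1) * (n - 2) * (n - 3) / 24 := by
  have h : (descPochhammer K 4).eval (n : K) = n * (n - 1) * (n - 2) * (n - 3) := by
    simp [descPochhammer_succ_eval]
  rw [eq_div_iff (by norm_num), ← h, descPochhammer_eval_eq_descFactorial,
    Nat.descFactorial_eq_factorial_mul_choose]
  push_cast [Nat.factorial]
  ring

lemma sum_diag_le_sum_sum {ι M : Type*} [Fintype ι] [AddCommMonoid M] [PartialOrder M]
    [IsOrderedAddMonoid M] {f : ι → ι → M} (hf : ∀ i j, 0 ≤ f i j) :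
    ∑ i, f i i ≤ ∑ i, ∑ j, f i j :=
  sum_le_sum fun i _ => single_le_sum (f := f i) (fun j _ => hf i j) (mem_univ i)

section Newton

variable {n : ℕ} (lam : Fin n → ℝ)

lemma esymm_eq_aeval (k : ℕ) :
    esymm k lam = MvPolynomial.aeval lam (MvPolynomial.esymm (Fin n) ℝ k) := by
  simp [esymm, MvPolynomial.esymm, map_sum]

lemma mul_esymm_eq_sum_pow (k : ℕ) :
    k * esymm k lam = (-1) ^ (k + 1) *
      ∑ a ∈ antidiagonal k with a.1 < k, (-1) ^ a.1 * esymm a.1 lam * ∑ i, lam i ^ a.2 := by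
  simpa [MvPolynomial.psum, map_sum, esymm_eq_aeval] using
    congrArg (MvPolynomial.aeval lam) (MvPolynomial.mul_esymm_eq_sum (Fin n) ℝ k)

lemma esymm_zero : esymm 0 lam = 1 := by
  simp [esymm]

lemma esymm_one : esymm 1 lam = ∑ i, lam i := by
  simpa [sum_filter, Nat.sum_antidiagonal_eq_sum_range_succ_mk, esymm_zero] using
    mul_esymm_eq_sum_pow lam 1

variable {lam}

lemma esymm_two_of_sum_eq_zero (h : ∑ i, lam i = 0) :
    esymm 2 lam = -(∑ i, lam i ^ 2) / 2 := by
  have h₂ : 2 * esymm 2 lam = -∑ i, lam i ^ 2 := by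
    simpa [sum_filter, Nat.sum_antidiagonal_eq_sum_range_succ_mk, sum_range_succ,
      Odd.neg_one_pow, Nat.odd_iff, esymm_zero, esymm_one, h] using mul_esymm_eq_sum_pow lam 2
  linarith

lemma esymm_four_of_sum_eq_zero (h : ∑ i, lam i = 0) :
    esymm 4 lam = (∑ i, lam i ^ 2) ^ 2 / 8 - (∑ i, lam i ^ 4) / 4 := by
  have h₄ : 4 * esymm 4 lam = -(esymm 2 lam * ∑ i, lam i ^ 2) - ∑ i, lam i ^ 4 := by
    simpa [sum_filter, Nat.sum_antidiagonal_eq_sum_range_succ_mk, sum_range_succ,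
      Odd.neg_one_pow, Nat.odd_iff, sub_eq_add_neg, esymm_zero, esymm_one, h] using
      mul_esymm_eq_sum_pow lam 4
  rw [esymm_two_of_sum_eq_zero h] at h₄
  linarith

end Newton

section PowerSums

variable {n : ℕ} (x : Fin n → ℝ)

lemma sum_quartic (c₄ c₃ c₂ c₁ c₀ : ℝ) :
    ∑ j, (c₄ * x j ^ 4 + c₃ * x j ^ 3 + c₂ * x j ^ 2 + c₁ * x j + c₀) =
      c₄ * ∑ j, x j ^ 4 + c₃ * ∑ j, x j ^ 3 + c₂ * ∑ j, x j ^ 2 + c₁ * ∑ j, x j + n * c₀ := by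
  simp [sum_add_distrib, ← mul_sum]

variable {x}

lemma sum_sum_sq_of_sum_eq_zero (h : ∑ i, x i = 0) (A B C : ℝ) :
    ∑ i, ∑ j, (A * (x i ^ 2 + x j ^ 2) + B * (x i * x j) - C) ^ 2 =
      2 * n * A ^ 2 * ∑ i, x i ^ 4 + (2 * A ^ 2 + B ^ 2) * (∑ i, x i ^ 2) ^ 2 +
        n ^ 2 * C ^ 2 - 4 * n * A * C * ∑ i, x i ^ 2 := by
  have inner (i : Fin n) : ∑ j, (A * (x i ^ 2 + x j ^ 2) + B * (x i * x j) - C) ^ 2 =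
      n * A ^ 2 * x i ^ 4 + 0 * x i ^ 3 +
        ((2 * A ^ 2 + B ^ 2) * ∑ j, x j ^ 2 - 2 * n * A * C) * x i ^ 2 +
        2 * A * B * (∑ j, x j ^ 3) * x i +
        (A ^ 2 * ∑ j, x j ^ 4 - 2 * A * C * ∑ j, x j ^ 2 + n * C ^ 2) := by
    rw [← sum_congr rfl fun j _ => show
        A ^ 2 * x j ^ 4 + 2 * A * B * x i * x j ^ 3 +
          ((2 * A ^ 2 + B ^ 2) * x i ^ 2 - 2 * A * C) * x j ^ 2 +
          (2 * A * B * x i ^ 3 - 2 * B * C * x i) * x j + (A * x i ^ 2 - C) ^ 2 =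
        (A * (x i ^ 2 + x j ^ 2) + B * (x i * x j) - C) ^ 2 by ring, sum_quartic, h]
    ring
  rw [sum_congr rfl fun i _ => inner i, sum_quartic, h]
  ring

lemma sum_pow_four_le_of_sum_eq_zero_s4 (hn : 3 ≤ n) (h : ∑ i, x i = 0) :
    n * (n - 1) * ∑ i, x i ^ 4 ≤ (n ^ 2 - 3 * n + 3) * (∑ i, x i ^ 2) ^ 2 := by
  set S₂ := ∑ i, x i ^ 2
  have hN : (3 : ℝ) ≤ n := by exact_mod_cast hn
  let q (i j : Fin n) : ℝ := (n - 1) * (x i ^ 2 + x j ^ 2) + (n - 1) * (n - 2) * (x i * x j) - S₂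
  have hdiag : ∑ i, q i i ^ 2 =
      (n * (n - 1)) ^ 2 * ∑ i, x i ^ 4 - 2 * n * (n - 1) * S₂ ^ 2 + n * S₂ ^ 2 := by
    rw [← sum_congr rfl fun i _ => show
        (n * (n - 1)) ^ 2 * x i ^ 4 + 0 * x i ^ 3 + (-2 * n * (n - 1) * S₂) * x i ^ 2 +
          0 * x i + S₂ ^ 2 = q i i ^ 2 by ring, sum_quartic]
    ring
  have hsq := sum_diag_le_sum_sum (f := fun i j => q i j ^ 2) fun _ _ => sq_nonneg _
  rw [hdiag, show ∑ i, ∑ j, q i j ^ 2 = _ from sum_sum_sq_of_sum_eq_zero h _ _ S₂] at hsq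
  have hpos : 0 < ((n : ℝ) - 1) * (n - 2) := by nlinarith
  refine le_of_mul_le_mul_left ?_ hpos
  linarith

end PowerSums

section Normalized

variable {n : ℕ} {lam : Fin n → ℝ}

lemma p_two_of_sum_eq_zero (h : ∑ i, lam i = 0) :
    p 2 lam = -(∑ i, lam i ^ 2) / (n * (n - 1)) := by
  rw [p, esymm_two_of_sum_eq_zero h, Nat.cast_choose_two, div_div_div_cancel_right₀ two_ne_zero]

lemma p_four_of_sum_eq_zero (h : ∑ i, lam i = 0) :
    p 4 lam =
      3 * ((∑ i, lam i ^ 2) ^ 2 - 2 * ∑ i, lam i ^ 4) / (n * (n - 1) * (n - 2) * (n - 3)) := by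
  rw [p, esymm_four_of_sum_eq_zero h, Nat.cast_choose_four,
    show ∀ a b : ℝ, a ^ 2 / 8 - b / 4 = 3 * (a ^ 2 - 2 * b) / 24 by intros; ring,
    div_div_div_cancel_right₀ (by norm_num)]

end Normalized

theorem p4_add_three_p2_sq_nonneg (n : ℕ) (hn : 4 ≤ n) (lam : Fin n → ℝ)
    (hsum : ∑ i, lam i = 0) :
    0 ≤ p 4 lam + 3 * p 2 lam ^ 2 := by
  have hN : (4 : ℝ) ≤ n := by exact_mod_cast hn
  have hS := sum_pow_four_le_of_sum_eq_zero_s4 (by omega) hsum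
  rw [p_four_of_sum_eq_zero hsum, p_two_of_sum_eq_zero hsum]
  set S₂ := ∑ i, lam i ^ 2
  set S₄ := ∑ i, lam i ^ 4
  have h₀ : (n : ℝ) ≠ 0 := by linarith
  have h₁ : (n : ℝ) - 1 ≠ 0 := by linarith
  have h₂ : (n : ℝ) - 2 ≠ 0 := by linarith
  have h₃ : (n : ℝ) - 3 ≠ 0 := by linarith
  calc 0 ≤ 6 * ((n ^ 2 - 3 * n + 3) * S₂ ^ 2 - n * (n - 1) * S₄) /
        ((n * (n - 1)) ^ 2 * ((n - 2) * (n - 3))) :=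
        div_nonneg (by linarith) (mul_nonneg (sq_nonneg _) (by nlinarith))
    _ = _ := by
      field_simp
      ring
end

section
/- Let λ₁, …, λₙ be real numbers and let k be a positive integer with k ≤ n − 1. Writing pⱼ = σⱼ(λ)/C(n,j), one has pₖ² ≥ p_{k−1} · p_{k+1}, with equality if and only if either all the λᵢ are equal, or at least n − k + 1 of the λᵢ are equal to zero. -/
open Finset

/-!
For a multiset `s` of `N` reals put `P = ∏ (X - x)`. By Rolle's theorem `P'` is again
real-rooted, and comparing coefficients shows that the roots of `P'` have the same normalized
means `p_j` as `s` for `j < N`. Differentiating therefore reduces Newton's inequality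
`p_k p_{k+2} ≤ p_{k+1}²` to `N = k + 2`. There, if no element vanishes, passing to the reciprocals
turns it into `p₂ ≤ p₁²`, which is the identity `N (N - 1) (p₁² - p₂) = ∑ (x - p₁)²`; equality
forces all elements to be equal.

If equality is inherited from a derivative with at least `N - k` zero roots, then `e_j(s) = 0`
for `k < j < N`. Since `e_{N-1}(s) = e_{N-2}(s) = 0` would give the reciprocals `p₁ = p₂ = 0`,
`0 ∈ s`, so `e_N(s) = 0` too: the `N - k` lowest coefficients of `P` vanish.
-/

open Polynomial

namespace Multiset

section CommRing

variable {R : Type*} [CommRing R]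

@[simp]
theorem esymm_zero_right (s : Multiset R) : s.esymm 0 = 1 := by
  simp [esymm]

theorem esymm_one_right (s : Multiset R) : s.esymm 1 = s.sum := by
  simp [esymm, powersetCard_one]

theorem esymm_cons_succ (a : R) (s : Multiset R) (j : ℕ) :
    (a ::ₘ s).esymm (j + 1) = s.esymm (j + 1) + a * s.esymm j := by
  simp [esymm, sum_map_mul_left]

theorem esymm_eq_zero_of_card_lt {s : Multiset R} {j : ℕ} (h : s.card < j) : s.esymm j = 0 := by
  simp [esymm, powersetCard_eq_empty _ h]

theorem esymm_card (s : Multiset R) : s.esymm s.card = s.prod := by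
  simp [esymm]

theorem esymm_replicate (N j : ℕ) (c : R) :
    (replicate N c).esymm j = N.choose j * c ^ j := by
  induction N generalizing j with
  | zero => cases j <;> simp [esymm, powersetCard_zero_right]
  | succ N ih =>
    cases j with
    | zero => simp
    | succ j =>
      rw [replicate_succ, esymm_cons_succ, ih, ih, Nat.choose_succ_succ']
      push_cast
      ring

theorem sq_sum_eq_sum_sq_add_two_mul_esymm_two (s : Multiset R) :
    s.sum ^ 2 = (s.map (· ^ 2)).sum + 2 * s.esymm 2 := by
  induction s using Multiset.induction_on with
  | empty => simp [esymm, powersetCard_zero_right]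
  | cons a t ih =>
    rw [esymm_cons_succ, esymm_one_right, sum_cons, map_cons, sum_cons]
    linear_combination ih

theorem sum_map_sub_sq (s : Multiset R) (m : R) :
    (s.map fun x => (x - m) ^ 2).sum = (s.map (· ^ 2)).sum - 2 * m * s.sum + s.card * m ^ 2 := by
  induction s using Multiset.induction_on with
  | empty => simp
  | cons a t ih =>
    simp only [map_cons, sum_cons, card_cons, ih]
    push_cast
    ring

theorem le_count_zero_iff_esymm_eq_zero [IsDomain R] [DecidableEq R] {s : Multiset R} {z : ℕ}
    (hz : z ≤ s.card) :
    z ≤ s.count 0 ↔ ∀ j, s.card - z < j → j ≤ s.card → s.esymm j = 0 := by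
  set P := (s.map fun a => X - C a).prod
  have hP : P ≠ 0 := (monic_multiset_prod_of_monic _ _ fun a _ => monic_X_sub_C a).ne_zero
  have hcount : s.count 0 = P.rootMultiplicity 0 := by
    rw [← count_roots, roots_multiset_prod_X_sub_C]
  rw [hcount, le_rootMultiplicity_iff hP, C_0, sub_zero, X_pow_dvd_iff]
  constructor
  · intro h j hjz hjs
    have := h (s.card - j) (by omega)
    rw [prod_X_sub_C_coeff s (by omega), Nat.sub_sub_self hjs] at this
    simpa using this
  · intro h d hd
    rw [prod_X_sub_C_coeff s (by omega), h _ (by omega) (by omega), mul_zero]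

end CommRing

section Field

variable {K : Type*} [Field K]

theorem esymm_map_inv_mul_prod {s : Multiset K} (hs : (0 : K) ∉ s) {i j : ℕ}
    (hij : i + j = s.card) : (s.map (·⁻¹)).esymm i * s.prod = s.esymm j := by
  induction s using Multiset.induction_on generalizing i j with
  | empty =>
    obtain ⟨rfl, rfl⟩ : i = 0 ∧ j = 0 := by simpa using hij
    simp
  | cons a t ih =>
    have ha : a ≠ 0 := fun h => hs (h ▸ mem_cons_self a t)
    have ht : (0 : K) ∉ t := fun h => hs (mem_cons_of_mem h)
    rw [card_cons] at hij
    rw [map_cons, prod_cons]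
    rcases i with _ | i
    · rw [zero_add] at hij
      rw [hij, esymm_zero_right, one_mul, ← prod_cons, ← card_cons, esymm_card]
    rcases j with _ | j
    · have hlast := ih ht (i := i) (j := 0) (by omega)
      rw [esymm_zero_right] at hlast
      rw [esymm_cons_succ, esymm_eq_zero_of_card_lt (by simp; omega), esymm_zero_right]
      linear_combination hlast + (t.map (·⁻¹)).esymm i * t.prod * inv_mul_cancel₀ ha
    · rw [esymm_cons_succ, esymm_cons_succ]
      linear_combination a * ih ht (i := i + 1) (j := j) (by omega) +
        ih ht (i := i) (j := j + 1) (by omega) +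
        (t.map (·⁻¹)).esymm i * t.prod * inv_mul_cancel₀ ha

noncomputable def esymmMean (s : Multiset K) (j : ℕ) : K :=
  s.esymm j / s.card.choose j

@[simp]
theorem esymmMean_zero_right (s : Multiset K) : s.esymmMean 0 = 1 := by
  simp [esymmMean]

theorem esymmMean_card (s : Multiset K) : s.esymmMean s.card = s.prod := by
  simp [esymmMean, esymm_card]

theorem esymmMean_eq_prod_mul_esymmMean_map_inv {s : Multiset K} (hs : (0 : K) ∉ s) {i j : ℕ}
    (hij : i + j = s.card) : s.esymmMean j = s.prod * (s.map (·⁻¹)).esymmMean i := by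
  rw [esymmMean, esymmMean, ← esymm_map_inv_mul_prod hs hij, card_map, ← hij,
    Nat.choose_symm_add]
  ring

theorem sq_esymmMean_sub_mul_eq_prod_sq_mul {s : Multiset K} {k : ℕ}
    (hs : s.card = k + 2) (h0 : (0 : K) ∉ s) :
    s.esymmMean (k + 1) ^ 2 - s.esymmMean k * s.esymmMean (k + 2) =
      s.prod ^ 2 * ((s.map (·⁻¹)).esymmMean 1 ^ 2 - (s.map (·⁻¹)).esymmMean 2) := by
  rw [esymmMean_eq_prod_mul_esymmMean_map_inv h0 (i := 1) (by omega),
    esymmMean_eq_prod_mul_esymmMean_map_inv h0 (i := 2) (by omega),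
    esymmMean_eq_prod_mul_esymmMean_map_inv h0 (i := 0) (by omega), esymmMean_zero_right]
  ring

variable [CharZero K]

theorem esymmMean_eq_zero_iff {s : Multiset K} {j : ℕ}
    (hj : j ≤ s.card) : s.esymmMean j = 0 ↔ s.esymm j = 0 := by
  rw [esymmMean, div_eq_zero_iff, or_iff_left]
  exact_mod_cast (Nat.choose_pos hj).ne'

theorem esymmMean_replicate {N j : ℕ} (hj : j ≤ N) (c : K) :
    (replicate N c).esymmMean j = c ^ j := by
  have : (N.choose j : K) ≠ 0 := by exact_mod_cast (Nat.choose_pos hj).ne'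
  rw [esymmMean, esymm_replicate, card_replicate]
  field_simp

theorem card_mul_card_sub_one_mul_sq_esymmMean_one_sub_esymmMean_two {s : Multiset K}
    (hs : 2 ≤ s.card) :
    s.card * (s.card - 1) * (s.esymmMean 1 ^ 2 - s.esymmMean 2) =
      (s.map fun x => (x - s.esymmMean 1) ^ 2).sum := by
  have hN : (s.card : K) ≠ 0 := by exact_mod_cast (by omega : s.card ≠ 0)
  have hN1 : (s.card : K) - 1 ≠ 0 := by
    rw [sub_ne_zero]; exact_mod_cast (by omega : s.card ≠ 1)
  have hsq := sq_sum_eq_sum_sq_add_two_mul_esymm_two s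
  rw [sum_map_sub_sq, esymmMean, esymmMean, Nat.choose_one_right, Nat.cast_choose_two,
    esymm_one_right]
  field_simp
  linear_combination (s.card : K) * hsq

end Field

end Multiset

namespace Polynomial

theorem card_roots_derivative_eq_natDegree_s6 {p : ℝ[X]} (hp : p.roots.card = p.natDegree) :
    (derivative p).roots.card = (derivative p).natDegree := by
  have h1 := card_roots_le_derivative p
  have h2 := card_roots' (derivative p)
  rw [natDegree_derivative] at h2 ⊢
  omega

theorem natDegree_sub_mul_esymm_roots_eq {R : Type*} [CommRing R] [IsDomain R] [CharZero R]
    {p : R[X]} (hp : p.roots.card = p.natDegree)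
    (hp' : (derivative p).roots.card = (derivative p).natDegree) {j : ℕ} (hj : j < p.natDegree) :
    ((p.natDegree - j : ℕ) : R) * p.roots.esymm j =
      p.natDegree * (derivative p).roots.esymm j := by
  have hlc : p.leadingCoeff * (-1) ^ j ≠ 0 := by
    refine mul_ne_zero (leadingCoeff_ne_zero.2 ?_) (pow_ne_zero _ (neg_ne_zero.2 one_ne_zero))
    rintro rfl
    simp at hj
  have hcoeff := coeff_eq_esymm_roots_of_card hp (k := p.natDegree - j) (by omega)
  have hcoeff' := coeff_eq_esymm_roots_of_card hp' (k := p.natDegree - 1 - j)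
    (by rw [natDegree_derivative]; omega)
  rw [natDegree_derivative, leadingCoeff_derivative, coeff_derivative,
    show p.natDegree - 1 - j + 1 = p.natDegree - j by omega,
    show p.natDegree - 1 - (p.natDegree - 1 - j) = j by omega] at hcoeff'
  rw [show p.natDegree - (p.natDegree - j) = j by omega] at hcoeff
  have hcast : ((p.natDegree - 1 - j : ℕ) : R) + 1 = ((p.natDegree - j : ℕ) : R) := by
    norm_cast; omega
  rw [hcast, hcoeff] at hcoeff'
  exact mul_left_cancel₀ hlc (by linear_combination hcoeff')

end Polynomial

namespace Multiset

theorem exists_card_eq_card_sub_one_and_esymmMean_eq (s : Multiset ℝ) :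
    ∃ t : Multiset ℝ, t.card = s.card - 1 ∧
      ∀ j < s.card, t.esymmMean j = s.esymmMean j := by
  set P := (s.map fun a => X - C a).prod
  have hroots : P.roots = s := roots_multiset_prod_X_sub_C s
  have hdeg : P.natDegree = s.card := natDegree_multiset_prod_X_sub_C_eq_card s
  have hP : P.roots.card = P.natDegree := by rw [hroots, hdeg]
  have hP' := card_roots_derivative_eq_natDegree_s6 hP
  refine ⟨(derivative P).roots, by rw [hP', natDegree_derivative, hdeg], fun j hj => ?_⟩
  have key := natDegree_sub_mul_esymm_roots_eq hP hP' (j := j) (by omega)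
  rw [hroots, hdeg] at key
  obtain ⟨n, hn⟩ : ∃ n, s.card = n + 1 := ⟨s.card - 1, by omega⟩
  have hchoose : (n.choose j : ℝ) * (n + 1) = (n + 1).choose j * ((n + 1 - j : ℕ) : ℝ) := by
    exact_mod_cast Nat.choose_mul_succ_eq n j
  rw [hn] at key hj
  rw [esymmMean, esymmMean, hP', natDegree_derivative, hdeg, hn, Nat.add_sub_cancel,
    div_eq_div_iff (by exact_mod_cast (Nat.choose_pos (by omega)).ne')
      (by exact_mod_cast (Nat.choose_pos (by omega)).ne')]
  refine mul_left_cancel₀ (n.cast_add_one_ne_zero) ?_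
  push_cast at key
  linear_combination (-((n + 1).choose j : ℝ)) * key - s.esymm j * hchoose

theorem esymmMean_two_le_sq_esymmMean_one (s : Multiset ℝ) :
    s.esymmMean 2 ≤ s.esymmMean 1 ^ 2 := by
  rcases lt_or_ge s.card 2 with hs | hs
  · rw [esymmMean, esymm_eq_zero_of_card_lt hs, zero_div]
    positivity
  have hN : (0 : ℝ) < s.card * (s.card - 1) := by
    have : (2 : ℝ) ≤ s.card := by exact_mod_cast hs
    nlinarith
  have hsum : 0 ≤ (s.map fun x => (x - s.esymmMean 1) ^ 2).sum :=
    sum_nonneg fun y hy => by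
      obtain ⟨x, -, rfl⟩ := mem_map.1 hy
      positivity
  rw [← card_mul_card_sub_one_mul_sq_esymmMean_one_sub_esymmMean_two hs] at hsum
  nlinarith

theorem eq_esymmMean_one_of_esymmMean_two_eq_sq {s : Multiset ℝ} (hs : 2 ≤ s.card)
    (h : s.esymmMean 2 = s.esymmMean 1 ^ 2) : ∀ x ∈ s, x = s.esymmMean 1 := by
  have hsum := card_mul_card_sub_one_mul_sq_esymmMean_one_sub_esymmMean_two hs
  rw [h, sub_self, mul_zero] at hsum
  intro x hx
  have hle : (x - s.esymmMean 1) ^ 2 ≤ 0 := by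
    rw [hsum]
    refine single_le_sum (fun y hy => ?_) _ (mem_map_of_mem _ hx)
    obtain ⟨x, -, rfl⟩ := mem_map.1 hy
    positivity
  exact sub_eq_zero.1 (pow_eq_zero_iff two_ne_zero |>.1 (le_antisymm hle (sq_nonneg _)))

theorem zero_mem_of_esymm_eq_zero {s : Multiset ℝ} (hs : 2 ≤ s.card)
    (h1 : s.esymm (s.card - 1) = 0) (h2 : s.esymm (s.card - 2) = 0) : (0 : ℝ) ∈ s := by
  by_contra h0
  have hprod : s.prod ≠ 0 := prod_ne_zero h0
  have hmean (i : ℕ) (hi : i ≤ s.card) (h : s.esymm (s.card - i) = 0) :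
      (s.map (·⁻¹)).esymmMean i = 0 := by
    have := esymmMean_eq_prod_mul_esymmMean_map_inv h0 (i := i) (j := s.card - i) (by omega)
    rw [esymmMean, h, zero_div, eq_comm] at this
    exact (mul_eq_zero.1 this).resolve_left hprod
  obtain ⟨x, hx⟩ := exists_mem_of_ne_zero (card_pos.1 (by omega : 0 < s.card))
  have hy := eq_esymmMean_one_of_esymmMean_two_eq_sq (s := s.map (·⁻¹)) (by simpa)
    (by rw [hmean 1 (by omega) h1, hmean 2 hs h2]; ring) x⁻¹ (mem_map_of_mem _ hx)
  rw [hmean 1 (by omega) h1, inv_eq_zero] at hy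
  exact h0 (hy ▸ hx)

theorem esymmMean_mul_esymmMean_le_sq {s : Multiset ℝ} {k : ℕ} (hk : k + 2 ≤ s.card) :
    s.esymmMean k * s.esymmMean (k + 2) ≤ s.esymmMean (k + 1) ^ 2 := by
  induction hm : s.card - (k + 2) generalizing s with
  | zero =>
    have hs : s.card = k + 2 := by omega
    by_cases h0 : (0 : ℝ) ∈ s
    · rw [← hs, esymmMean_card, prod_eq_zero h0, mul_zero]
      positivity
    · have hbase := sq_esymmMean_sub_mul_eq_prod_sq_mul hs h0
      have hnewton := esymmMean_two_le_sq_esymmMean_one (s.map (·⁻¹))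
      nlinarith [sq_nonneg s.prod]
  | succ m ih =>
    obtain ⟨t, ht, hst⟩ := exists_card_eq_card_sub_one_and_esymmMean_eq s
    rw [← hst k (by omega), ← hst (k + 1) (by omega), ← hst (k + 2) (by omega)]
    exact ih (by omega) (by omega)

theorem eq_const_or_le_count_zero_of_sq_esymmMean_eq_of_card_eq {s : Multiset ℝ} {k : ℕ}
    (hs : s.card = k + 2)
    (h : s.esymmMean (k + 1) ^ 2 = s.esymmMean k * s.esymmMean (k + 2)) :
    (∃ c, ∀ x ∈ s, x = c) ∨ s.card - k ≤ s.count 0 := by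
  by_cases h0 : (0 : ℝ) ∈ s
  · right
    have htop : s.esymm (k + 2) = 0 := by rw [← hs, esymm_card, prod_eq_zero h0]
    rw [(esymmMean_eq_zero_iff hs.ge).2 htop, mul_zero, sq_eq_zero_iff,
      esymmMean_eq_zero_iff (by omega)] at h
    rw [le_count_zero_iff_esymm_eq_zero (by omega)]
    intro j hj hjs
    obtain rfl | rfl : j = k + 1 ∨ j = k + 2 := by omega
    exacts [h, htop]
  · left
    have hprod : s.prod ^ 2 ≠ 0 := pow_ne_zero 2 (prod_ne_zero h0)
    have hbase := sq_esymmMean_sub_mul_eq_prod_sq_mul hs h0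
    rw [h, sub_self, eq_comm, mul_eq_zero, or_iff_right hprod, sub_eq_zero] at hbase
    have hy := eq_esymmMean_one_of_esymmMean_two_eq_sq (by simp; omega) hbase.symm
    refine ⟨((s.map (·⁻¹)).esymmMean 1)⁻¹, fun x hx => ?_⟩
    rw [← hy x⁻¹ (mem_map_of_mem _ hx), inv_inv]

theorem eq_const_or_le_count_zero_of_sq_esymmMean_eq {s : Multiset ℝ} {k : ℕ}
    (hk : k + 2 ≤ s.card) (h : s.esymmMean (k + 1) ^ 2 = s.esymmMean k * s.esymmMean (k + 2)) :
    (∃ c, ∀ x ∈ s, x = c) ∨ s.card - k ≤ s.count 0 := by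
  induction hm : s.card - (k + 2) generalizing s with
  | zero => exact eq_const_or_le_count_zero_of_sq_esymmMean_eq_of_card_eq (by omega) h
  | succ m ih =>
    obtain ⟨t, ht, hst⟩ := exists_card_eq_card_sub_one_and_esymmMean_eq s
    rw [← hst k (by omega), ← hst (k + 1) (by omega), ← hst (k + 2) (by omega)] at h
    rcases ih (s := t) (by omega) h (by omega) with ⟨c, hc⟩ | htzero
    · left
      have hrep : t = replicate t.card c := eq_replicate_card.2 hc
      have h1 : s.esymmMean 1 = c := by
        rw [← hst 1 (by omega), hrep, esymmMean_replicate (by omega), pow_one]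
      have h2 : s.esymmMean 2 = s.esymmMean 1 ^ 2 := by
        rw [← hst 2 (by omega), hrep, esymmMean_replicate (by omega), h1]
      exact ⟨_, eq_esymmMean_one_of_esymmMean_two_eq_sq (by omega) h2⟩
    · right
      have hvan : ∀ j, k < j → j < s.card → s.esymm j = 0 := by
        intro j hkj hjs
        rw [← esymmMean_eq_zero_iff hjs.le, ← hst j hjs, esymmMean_eq_zero_iff (by omega)]
        exact (le_count_zero_iff_esymm_eq_zero (by omega)).1 htzero j (by omega) (by omega)
      have h0 : (0 : ℝ) ∈ s :=
        zero_mem_of_esymm_eq_zero (by omega) (hvan _ (by omega) (by omega))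
          (hvan _ (by omega) (by omega))
      rw [le_count_zero_iff_esymm_eq_zero (by omega)]
      intro j hkj hjs
      rcases hjs.lt_or_eq with hjs | rfl
      · exact hvan j (by omega) hjs
      · rw [esymm_card, prod_eq_zero h0]

theorem sq_esymmMean_eq_mul_iff {s : Multiset ℝ} {k : ℕ} (hk : k + 2 ≤ s.card) :
    s.esymmMean (k + 1) ^ 2 = s.esymmMean k * s.esymmMean (k + 2) ↔
      (∃ c, ∀ x ∈ s, x = c) ∨ s.card - k ≤ s.count 0 := by
  refine ⟨eq_const_or_le_count_zero_of_sq_esymmMean_eq hk, ?_⟩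
  rintro (⟨c, hc⟩ | hzero)
  · rw [eq_replicate_card.2 hc, esymmMean_replicate (by omega), esymmMean_replicate (by omega),
      esymmMean_replicate hk]
    ring
  · have hvan := (le_count_zero_iff_esymm_eq_zero (by omega)).1 hzero
    rw [(esymmMean_eq_zero_iff (by omega)).2 (hvan (k + 1) (by omega) (by omega)),
      (esymmMean_eq_zero_iff hk).2 (hvan (k + 2) (by omega) hk)]
    ring

end Multiset

theorem newton_inequality_sharp (n k : ℕ) (hk1 : 1 ≤ k) (hk : k ≤ n - 1)
    (lam : Fin n → ℝ) :
    p (k - 1) lam * p (k + 1) lam ≤ p k lam ^ 2 ∧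
      (p k lam ^ 2 = p (k - 1) lam * p (k + 1) lam ↔
        (∀ i j, lam i = lam j) ∨
          n - k + 1 ≤ (Finset.univ.filter fun i => lam i = 0).card) := by
  set s : Multiset ℝ := univ.val.map lam
  have hcard : s.card = n := by simp [s]
  have hp (j : ℕ) : p j lam = s.esymmMean j := by
    rw [p, esymm, ← Finset.esymm_map_val, Multiset.esymmMean, hcard]
  have hcount : s.count 0 = (Finset.univ.filter fun i => lam i = 0).card := by
    rw [Multiset.count_map, Finset.card_def, Finset.filter_val]
    simp only [eq_comm]
  have hconst : (∃ c, ∀ x ∈ s, x = c) ↔ ∀ i j, lam i = lam j := by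
    refine ⟨fun ⟨c, hc⟩ i j => by rw [hc (lam i) (by simp [s]), hc (lam j) (by simp [s])],
      fun h => ⟨lam ⟨0, by omega⟩, fun x hx => ?_⟩⟩
    obtain ⟨i, -, rfl⟩ := Multiset.mem_map.1 hx
    exact h _ _
  obtain ⟨m, rfl⟩ : ∃ m, k = m + 1 := ⟨k - 1, by omega⟩
  simp only [hp, Nat.add_sub_cancel]
  rw [Multiset.sq_esymmMean_eq_mul_iff (by omega), hconst, hcount, hcard,
    show n - (m + 1) + 1 = n - m by omega]
  exact ⟨Multiset.esymmMean_mul_esymmMean_le_sq (by omega), Iff.rfl⟩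
end

section
/- Let n ≥ 4 and let λ₁, …, λₙ be real numbers with λ₁ + ⋯ + λₙ = 0. Writing pₖ = σₖ(λ)/C(n,k), one has (3p₃² − 4p₂p₄)(p₃² + 4p₂³) ≤ 0. -/
/-!
Differentiating `∏ (X - λᵢ)` keeps all roots real (Rolle) and preserves the normalized
elementary symmetric functions `p₀, …, p_{n-1}`, so the claim reduces to `n = 4` with `p₁ = 0`.
For four reals, `p₁ = 0` gives `p_k(λ + t)` explicitly in `t`, and Newton's inequality
`p₂ p₄ ≤ p₃²` for `λ + t`, at `t = -p₃ / (2 p₂)`, becomes the claim divided by `16 p₂³ < 0`.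
The case `p₂ = 0` is degenerate: with `p₁ = 0` it forces `λ = 0`.
-/

open Finset

open Polynomial

theorem newton_inequality_four (w x y z : ℝ) :
    8 * ((w * x + w * y + w * z + x * y + x * z + y * z) * (w * x * y * z)) ≤
      3 * (w * x * y + w * x * z + w * y * z + x * y * z) ^ 2 := by
  nlinarith [sq_nonneg (w * x * (y - z)), sq_nonneg (w * y * (x - z)), sq_nonneg (w * z * (x - y)),
    sq_nonneg (x * y * (w - z)), sq_nonneg (x * z * (w - y)), sq_nonneg (y * z * (w - x)),
    sq_nonneg (x * y * z - w * y * z), sq_nonneg (x * y * z - w * x * z),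
    sq_nonneg (x * y * z - w * x * y), sq_nonneg (w * y * z - w * x * z),
    sq_nonneg (w * y * z - w * x * y), sq_nonneg (w * x * z - w * x * y)]

theorem mul_nonpos_of_newton_inequality_shift {a b c : ℝ} (ha : a < 0)
    (h : ∀ t, (a + t ^ 2) * (c + 4 * t * b + 6 * t ^ 2 * a + t ^ 4) ≤ (b + 3 * t * a + t ^ 3) ^ 2) :
    (3 * b ^ 2 - 4 * a * c) * (b ^ 2 + 4 * a ^ 3) ≤ 0 := by
  have ha₀ : a ≠ 0 := ha.ne
  set t := -b / (2 * a)
  have key : (3 * b ^ 2 - 4 * a * c) * (b ^ 2 + 4 * a ^ 3) = 16 * a ^ 3 *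
      ((b + 3 * t * a + t ^ 3) ^ 2 - (a + t ^ 2) * (c + 4 * t * b + 6 * t ^ 2 * a + t ^ 4)) := by
    simp only [t]
    field_simp
    ring
  rw [key]
  exact mul_nonpos_of_nonpos_of_nonneg (by linarith [Odd.pow_neg (by decide : Odd 3) ha])
    (sub_nonneg.2 (h t))

namespace Multiset

theorem card_roots_derivative_prod_X_sub_C {s : Multiset ℝ} {m : ℕ} (hs : card s = m + 1) :
    card (derivative (s.map fun r => X - C r).prod).roots = m := by
  set P := (s.map fun r => X - C r).prod
  have hP : P.natDegree = m + 1 := by rw [natDegree_multiset_prod_X_sub_C_eq_card, hs]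
  have hle : card (derivative P).roots ≤ m := by
    simpa [natDegree_derivative, hP] using (derivative P).card_roots'
  have hge := P.card_roots_le_derivative
  rw [roots_multiset_prod_X_sub_C, hs] at hge
  omega

theorem esymm_roots_derivative_prod_X_sub_C {s : Multiset ℝ} {m j : ℕ} (hs : card s = m + 1)
    (hj : j ≤ m) :
    ((m : ℝ) + 1 - j) * s.esymm j =
      (m + 1) * (derivative (s.map fun r => X - C r).prod).roots.esymm j := by
  set P := (s.map fun r => X - C r).prod
  have hP : P.natDegree = m + 1 := by rw [natDegree_multiset_prod_X_sub_C_eq_card, hs]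
  have hQ : (derivative P).natDegree = m := by rw [natDegree_derivative, hP]; rfl
  have hroots : card (derivative P).roots = (derivative P).natDegree := by
    rw [hQ, card_roots_derivative_prod_X_sub_C hs]
  have hlead : (derivative P).leadingCoeff = m + 1 := by
    rw [leadingCoeff, hQ, coeff_derivative, ← hP,
      (monic_multiset_prod_of_monic _ _ fun r _ => monic_X_sub_C r).coeff_natDegree]
    ring
  -- Vieta for `P` and for `P' = (m + 1) ∏ (X - μ)`, compared at `X ^ (m - j)`.
  have hcoeff := coeff_derivative P (m - j)
  rw [coeff_eq_esymm_roots_of_card hroots (by omega), hlead, hQ, prod_X_sub_C_coeff s (by omega),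
    hs, Nat.sub_sub_self hj, show m + 1 - (m - j + 1) = j by omega, Nat.cast_sub hj] at hcoeff
  refine mul_left_cancel₀ (pow_ne_zero j (neg_ne_zero.2 (one_ne_zero (α := ℝ)))) ?_
  linear_combination -hcoeff

noncomputable def normalizedEsymm (s : Multiset ℝ) (k : ℕ) : ℝ :=
  s.esymm k / (card s).choose k

theorem exists_normalizedEsymm_eq_of_card_eq_succ {s : Multiset ℝ} {m : ℕ}
    (hs : card s = m + 1) :
    ∃ t : Multiset ℝ, card t = m ∧ ∀ j ≤ m, t.normalizedEsymm j = s.normalizedEsymm j := by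
  refine ⟨_, card_roots_derivative_prod_X_sub_C hs, fun j hj => ?_⟩
  have hchoose : (m.choose j : ℝ) * (m + 1) = (m + 1).choose j * ((m : ℝ) + 1 - j) := by
    have := congrArg (Nat.cast (R := ℝ)) (Nat.choose_mul_succ_eq m j)
    push_cast [Nat.cast_sub (show j ≤ m + 1 by omega)] at this
    exact this
  have hchoose_ne (n : ℕ) (hjn : j ≤ n) : (n.choose j : ℝ) ≠ 0 := by
    exact_mod_cast (Nat.choose_pos hjn).ne'
  rw [normalizedEsymm, normalizedEsymm, card_roots_derivative_prod_X_sub_C hs, hs,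
    div_eq_div_iff (hchoose_ne m hj) (hchoose_ne (m + 1) (by omega))]
  refine mul_left_cancel₀ (show (m : ℝ) + 1 ≠ 0 by positivity) ?_
  linear_combination -((m + 1).choose j : ℝ) * esymm_roots_derivative_prod_X_sub_C hs hj
    - s.esymm j * hchoose

theorem exists_card_eq_normalizedEsymm_eq {s : Multiset ℝ} {d : ℕ} (hd : d ≤ card s) :
    ∃ t : Multiset ℝ, card t = d ∧ ∀ j ≤ d, t.normalizedEsymm j = s.normalizedEsymm j := by
  obtain ⟨m, hm⟩ := Nat.exists_eq_add_of_le hd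
  clear hd
  induction m generalizing s with
  | zero => exact ⟨s, hm, fun _ _ => rfl⟩
  | succ m ih =>
    obtain ⟨t, ht, hts⟩ := exists_normalizedEsymm_eq_of_card_eq_succ hm
    obtain ⟨u, hu, hut⟩ := ih ht
    exact ⟨u, hu, fun j hj => (hut j hj).trans (hts j (Nat.le_add_right_of_le hj))⟩

theorem normalizedEsymm_quadruple (w x y z : ℝ) :
    ({w, x, y, z} : Multiset ℝ).normalizedEsymm 1 = (w + x + y + z) / 4 ∧
      ({w, x, y, z} : Multiset ℝ).normalizedEsymm 2 =
        (w * x + w * y + w * z + x * y + x * z + y * z) / 6 ∧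
      ({w, x, y, z} : Multiset ℝ).normalizedEsymm 3 =
        (w * x * y + w * x * z + w * y * z + x * y * z) / 4 ∧
      ({w, x, y, z} : Multiset ℝ).normalizedEsymm 4 = w * x * y * z := by
  refine ⟨?_, ?_, ?_, ?_⟩ <;>
    norm_num [normalizedEsymm, esymm, powersetCard_one, Nat.choose] <;> ring

theorem newton_inequality_shift {s : Multiset ℝ} (hs : card s = 4)
    (h1 : s.normalizedEsymm 1 = 0) (t : ℝ) :
    (s.normalizedEsymm 2 + t ^ 2) *
        (s.normalizedEsymm 4 + 4 * t * s.normalizedEsymm 3 + 6 * t ^ 2 * s.normalizedEsymm 2 +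
          t ^ 4) ≤
      (s.normalizedEsymm 3 + 3 * t * s.normalizedEsymm 2 + t ^ 3) ^ 2 := by
  obtain ⟨w, x, y, z, rfl⟩ := card_eq_four.mp hs
  obtain ⟨e₁, e₂, e₃, e₄⟩ := normalizedEsymm_quadruple w x y z
  rw [e₁] at h1
  rw [e₂, e₃, e₄]
  obtain rfl : z = -(w + x + y) := by linarith
  linear_combination newton_inequality_four (w + t) (x + t) (y + t) (-(w + x + y) + t) / 48

theorem normalizedEsymm_two_neg {s : Multiset ℝ} (hs : card s = 4)
    (h1 : s.normalizedEsymm 1 = 0) (h0 : s ≠ replicate 4 0) : s.normalizedEsymm 2 < 0 := by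
  obtain ⟨w, x, y, z, rfl⟩ := card_eq_four.mp hs
  obtain ⟨e₁, e₂, -⟩ := normalizedEsymm_quadruple w x y z
  rw [e₁] at h1
  rw [e₂]
  by_contra! hle
  have hsq : w ^ 2 + x ^ 2 + y ^ 2 + z ^ 2 ≤ 0 := by nlinarith
  obtain ⟨rfl, rfl, rfl, rfl⟩ : w = 0 ∧ x = 0 ∧ y = 0 ∧ z = 0 := by
    refine ⟨?_, ?_, ?_, ?_⟩ <;> refine (pow_eq_zero_iff two_ne_zero).mp ?_ <;>
      nlinarith [sq_nonneg w, sq_nonneg x, sq_nonneg y, sq_nonneg z]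
  exact h0 rfl

theorem product_nonpos_of_card_eq_four {s : Multiset ℝ} (hs : card s = 4)
    (h1 : s.normalizedEsymm 1 = 0) :
    (3 * s.normalizedEsymm 3 ^ 2 - 4 * s.normalizedEsymm 2 * s.normalizedEsymm 4) *
      (s.normalizedEsymm 3 ^ 2 + 4 * s.normalizedEsymm 2 ^ 3) ≤ 0 := by
  by_cases h0 : s = replicate 4 0
  · subst h0
    simp [normalizedEsymm, esymm]
  · exact mul_nonpos_of_newton_inequality_shift (normalizedEsymm_two_neg hs h1 h0)
      (newton_inequality_shift hs h1)

theorem product_nonpos_of_sum_eq_zero {s : Multiset ℝ} (hs : 4 ≤ card s) (hsum : s.sum = 0) :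
    (3 * s.normalizedEsymm 3 ^ 2 - 4 * s.normalizedEsymm 2 * s.normalizedEsymm 4) *
      (s.normalizedEsymm 3 ^ 2 + 4 * s.normalizedEsymm 2 ^ 3) ≤ 0 := by
  obtain ⟨t, ht, hts⟩ := exists_card_eq_normalizedEsymm_eq hs
  have h1 : t.normalizedEsymm 1 = 0 := by
    rw [hts 1 (by norm_num), normalizedEsymm]
    simp [esymm, powersetCard_one, hsum]
  rw [← hts 2 (by norm_num), ← hts 3 (by norm_num), ← hts 4 le_rfl]
  exact product_nonpos_of_card_eq_four ht h1

end Multiset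

theorem product_inequality (n : ℕ) (hn : 4 ≤ n) (lam : Fin n → ℝ)
    (hsum : ∑ i, lam i = 0) :
    (3 * p 3 lam ^ 2 - 4 * p 2 lam * p 4 lam) * (p 3 lam ^ 2 + 4 * p 2 lam ^ 3) ≤ 0 := by
  have hp (k : ℕ) : p k lam = (univ.val.map lam).normalizedEsymm k := by
    rw [p, esymm, Multiset.normalizedEsymm, Finset.esymm_map_val, Multiset.card_map, card_val,
      card_univ, Fintype.card_fin]
  simp only [hp]
  exact Multiset.product_nonpos_of_sum_eq_zero (by simpa using hn) hsum
end
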